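/- Let B ≥ 0 and let g₁, g₂ : [0,1]^d × [0,1] → ℝ be measurable with ‖g₁‖_∞ ≤ B and ‖g₂‖_∞ ≤ B. Let S_C : [0,1]^d × [0,1] → [0,1], f_C : [0,1]^d × [0,1) → [0,∞), and α : [0,1]^d → [0,1] be measurable, and for each log-hazard g define the density p_g by: p_g(x, y, 1) = S_C(y | x) · e^{g(x,y)} · e^{−Λ_g(y|x)} for y ∈ [0,1); p_g(x, y, 0) = f_C(y | x) · e^{−Λ_g(y|x)} for y ∈ [0,1); p_g(x, 1, 0) = α(x) · e^{−Λ_g(1|x)}; and p_g(x, 1, 1) = 0. Then for every point (x, y, Δ) with Δ ∈ {0,1} at which p_{g₂}(x, y, Δ) > 0, one has p_{g₁}(x, y, Δ) > 0 and |log(p_{g₁}(x, y, Δ) / p_{g₂}(x, y, Δ))| ≤ (1 + e^B) · ‖g₁ − g₂‖_∞. -/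

import Mathlib

/-- Cumulative hazard `Λ_g(y | x) = ∫_0^y exp(g(x,s)) ds`. -/
noncomputable def cumHaz (d : ℕ) (g : (Fin d → ℝ) → ℝ → ℝ) (x : Fin d → ℝ) (y : ℝ) : ℝ :=
  ∫ s in (0 : ℝ)..y, Real.exp (g x s)

/-- Density of the right-censored observation `(Y, Δ)` given covariate `x`, for log-hazard `g`,
censoring survival `S_C`, censoring density `f_C` on `[0,1)`, and administrative point mass
`α(x)` at `y = 1`:
`p_g(x, y, 1) = S_C(y|x) e^{g(x,y)} e^{−Λ_g(y|x)}` for `y ∈ [0,1)`, `p_g(x, 1, 1) = 0`,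
`p_g(x, y, 0) = f_C(y|x) e^{−Λ_g(y|x)}` for `y ∈ [0,1)`, and
`p_g(x, 1, 0) = α(x) e^{−Λ_g(1|x)}`. -/
noncomputable def censDensity (d : ℕ) (SC fC : (Fin d → ℝ) → ℝ → ℝ) (α : (Fin d → ℝ) → ℝ)
    (g : (Fin d → ℝ) → ℝ → ℝ) (x : Fin d → ℝ) (y : ℝ) (Δ : Bool) : ℝ :=
  if Δ then
    (if y < 1 then SC x y * Real.exp (g x y) * Real.exp (-(cumHaz d g x y)) else 0)
  else
    (if y < 1 then fC x y * Real.exp (-(cumHaz d g x y))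
     else α x * Real.exp (-(cumHaz d g x 1)))


lemma myExpDiff {a b B : ℝ} (ha : |a| ≤ B) (hb : |b| ≤ B) :
    |Real.exp a - Real.exp b| ≤ Real.exp B * |a - b| := by
  wlog h : b ≤ a generalizing a b
  · have := this hb ha (le_of_not_ge h)
    rwa [abs_sub_comm, abs_sub_comm a b]
  have haB : Real.exp a ≤ Real.exp B := Real.exp_le_exp.mpr (abs_le.mp ha).2
  have h1 : (b - a) + 1 ≤ Real.exp (b - a) := Real.add_one_le_exp _
  have h2 : Real.exp b = Real.exp a * Real.exp (b - a) := by
    rw [← Real.exp_add]; ring_nf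
  rw [abs_of_nonneg (sub_nonneg.mpr (Real.exp_le_exp.mpr h)), abs_of_nonneg (sub_nonneg.mpr h)]
  nlinarith [Real.exp_pos a, Real.exp_pos (b - a)]

lemma myII {d : ℕ} {g : (Fin d → ℝ) → ℝ → ℝ} (hm : Measurable (Function.uncurry g))
    (x : Fin d → ℝ) {y B : ℝ} (hy : y ∈ Set.Icc (0:ℝ) 1)
    (hb : ∀ t ∈ Set.Icc (0:ℝ) 1, |g x t| ≤ B) :
    IntervalIntegrable (fun s => Real.exp (g x s)) MeasureTheory.volume 0 y := by
  have hms : Measurable fun s => Real.exp (g x s) :=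
    Real.measurable_exp.comp (hm.comp (measurable_const.prodMk measurable_id))
  rw [intervalIntegrable_iff]
  apply MeasureTheory.Integrable.mono' ((MeasureTheory.integrableOn_const_iff (C := Real.exp B)).mpr
    (Or.inr (by rw [Set.uIoc_of_le hy.1]; exact measure_Ioc_lt_top)))
    hms.aestronglyMeasurable
  filter_upwards [MeasureTheory.self_mem_ae_restrict measurableSet_uIoc] with s hs
  rw [Set.uIoc_of_le hy.1] at hs
  have hs' : s ∈ Set.Icc (0:ℝ) 1 := ⟨le_of_lt hs.1, le_trans hs.2 hy.2⟩
  have := hb s hs'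
  rw [Real.norm_eq_abs, abs_of_pos (Real.exp_pos _)]
  exact Real.exp_le_exp.mpr (le_trans (le_abs_self _) this)

lemma myCumHazDiff {d : ℕ} {B : ℝ} {g₁ g₂ : (Fin d → ℝ) → ℝ → ℝ}
    (hm₁ : Measurable (Function.uncurry g₁)) (hm₂ : Measurable (Function.uncurry g₂))
    {x : Fin d → ℝ}
    (hb₁ : ∀ t ∈ Set.Icc (0:ℝ) 1, |g₁ x t| ≤ B)
    (hb₂ : ∀ t ∈ Set.Icc (0:ℝ) 1, |g₂ x t| ≤ B)
    {η : ℝ} (hη0 : 0 ≤ η)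
    (hη : ∀ t ∈ Set.Icc (0:ℝ) 1, |g₁ x t - g₂ x t| ≤ η)
    {y : ℝ} (hy : y ∈ Set.Icc (0:ℝ) 1) :
    |cumHaz d g₁ x y - cumHaz d g₂ x y| ≤ Real.exp B * η := by
  have h1 := myII hm₁ x hy hb₁
  have h2 := myII hm₂ x hy hb₂
  have heq : cumHaz d g₁ x y - cumHaz d g₂ x y
      = ∫ s in (0:ℝ)..y, (Real.exp (g₁ x s) - Real.exp (g₂ x s)) :=
    (intervalIntegral.integral_sub h1 h2).symm
  rw [heq]
  have hbnd : ∀ s ∈ Set.uIoc (0:ℝ) y, ‖Real.exp (g₁ x s) - Real.exp (g₂ x s)‖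
      ≤ Real.exp B * η := by
    intro s hs
    rw [Set.uIoc_of_le hy.1] at hs
    have hs' : s ∈ Set.Icc (0:ℝ) 1 := ⟨le_of_lt hs.1, le_trans hs.2 hy.2⟩
    rw [Real.norm_eq_abs]
    calc |Real.exp (g₁ x s) - Real.exp (g₂ x s)| ≤ Real.exp B * |g₁ x s - g₂ x s| :=
          myExpDiff (hb₁ s hs') (hb₂ s hs')
      _ ≤ Real.exp B * η := by
          exact mul_le_mul_of_nonneg_left (hη s hs') (le_of_lt (Real.exp_pos B))
  have := intervalIntegral.norm_integral_le_of_norm_le_const hbnd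
  rw [Real.norm_eq_abs] at this
  calc |∫ s in (0:ℝ)..y, (Real.exp (g₁ x s) - Real.exp (g₂ x s))|
      ≤ Real.exp B * η * |y - 0| := this
    _ ≤ Real.exp B * η * 1 := by
        apply mul_le_mul_of_nonneg_left _ (by positivity)
        rw [sub_zero, abs_of_nonneg hy.1]; exact hy.2
    _ = Real.exp B * η := mul_one _

lemma myAbsSub (a b : ℝ) : |a - b| ≤ |a| + |b| := by
  calc |a - b| = |a + -b| := by ring_nf
    _ ≤ |a| + |-b| := abs_add_le _ _
    _ = |a| + |b| := by rw [abs_neg]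

/-- **Likelihood ratio bound.** Let `B ≥ 0` and let `g₁, g₂` be measurable log-hazards on
`[0,1]^d × [0,1]` with `‖gᵢ‖_∞ ≤ B`.  Let `S_C`, `f_C`, `α` be a measurable censoring mechanism
(`S_C ∈ [0,1]`, `f_C ≥ 0`, `α ∈ [0,1]`) and `η` an upper bound for `|g₁ - g₂|` on the domain
(in particular `η = ‖g₁ - g₂‖_∞`).  Then at every point `(x, y, Δ)` of the domain at which
`p_{g₂}(x,y,Δ) > 0`, also `p_{g₁}(x,y,Δ) > 0` and
`|log(p_{g₁}(x,y,Δ) / p_{g₂}(x,y,Δ))| ≤ (1 + e^B) · η`. -/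
theorem likelihood_ratio_bound
    (d : ℕ) (B : ℝ) (hB : 0 ≤ B)
    (g₁ g₂ : (Fin d → ℝ) → ℝ → ℝ)
    (hm₁ : Measurable (Function.uncurry g₁)) (hm₂ : Measurable (Function.uncurry g₂))
    (hb₁ : ∀ x ∈ Set.Icc (0 : Fin d → ℝ) 1, ∀ t ∈ Set.Icc (0 : ℝ) 1, |g₁ x t| ≤ B)
    (hb₂ : ∀ x ∈ Set.Icc (0 : Fin d → ℝ) 1, ∀ t ∈ Set.Icc (0 : ℝ) 1, |g₂ x t| ≤ B)
    (SC fC : (Fin d → ℝ) → ℝ → ℝ) (α : (Fin d → ℝ) → ℝ)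
    (hmSC : Measurable (Function.uncurry SC)) (hmfC : Measurable (Function.uncurry fC))
    (hmα : Measurable α)
    (hSC : ∀ x ∈ Set.Icc (0 : Fin d → ℝ) 1, ∀ y ∈ Set.Icc (0 : ℝ) 1,
      SC x y ∈ Set.Icc (0 : ℝ) 1)
    (hfC : ∀ x ∈ Set.Icc (0 : Fin d → ℝ) 1, ∀ y ∈ Set.Ico (0 : ℝ) 1, 0 ≤ fC x y)
    (hα : ∀ x ∈ Set.Icc (0 : Fin d → ℝ) 1, α x ∈ Set.Icc (0 : ℝ) 1)
    (η : ℝ)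
    (hη : ∀ x ∈ Set.Icc (0 : Fin d → ℝ) 1, ∀ t ∈ Set.Icc (0 : ℝ) 1, |g₁ x t - g₂ x t| ≤ η)
    (x : Fin d → ℝ) (hx : x ∈ Set.Icc (0 : Fin d → ℝ) 1)
    (y : ℝ) (hy : y ∈ Set.Icc (0 : ℝ) 1) (Δ : Bool)
    (hpos : 0 < censDensity d SC fC α g₂ x y Δ) :
    0 < censDensity d SC fC α g₁ x y Δ ∧
      |Real.log (censDensity d SC fC α g₁ x y Δ / censDensity d SC fC α g₂ x y Δ)| ≤
        (1 + Real.exp B) * η := by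
  have hη0 : 0 ≤ η := le_trans (abs_nonneg _) (hη x hx 0 ⟨le_refl 0, zero_le_one⟩)
  have hΛ : ∀ y' ∈ Set.Icc (0:ℝ) 1, |cumHaz d g₁ x y' - cumHaz d g₂ x y'| ≤ Real.exp B * η :=
    fun y' hy' => myCumHazDiff hm₁ hm₂ (hb₁ x hx) (hb₂ x hx) hη0 (hη x hx) hy'
  have hg : |g₁ x y - g₂ x y| ≤ η := hη x hx y hy
  have hEB : (0:ℝ) < Real.exp B := Real.exp_pos B
  cases Δ with
  | true =>
    by_cases hy1 : y < 1
    · simp only [censDensity, if_true, if_pos hy1] at hpos ⊢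
      have hΛy := hΛ y hy
      have hSCpos : 0 < SC x y := by
        nlinarith [mul_pos (Real.exp_pos (g₂ x y)) (Real.exp_pos (-(cumHaz d g₂ x y)))]
      refine ⟨mul_pos (mul_pos hSCpos (Real.exp_pos _)) (Real.exp_pos _), ?_⟩
      rw [mul_assoc, mul_assoc, ← Real.exp_add, ← Real.exp_add,
        mul_div_mul_left _ _ (ne_of_gt hSCpos), ← Real.exp_sub, Real.log_exp]
      have h1 : |(g₁ x y + -(cumHaz d g₁ x y)) - (g₂ x y + -(cumHaz d g₂ x y))|
          ≤ |g₁ x y - g₂ x y| + |cumHaz d g₁ x y - cumHaz d g₂ x y| := by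
        rw [show (g₁ x y + -(cumHaz d g₁ x y)) - (g₂ x y + -(cumHaz d g₂ x y))
            = (g₁ x y - g₂ x y) - (cumHaz d g₁ x y - cumHaz d g₂ x y) by ring]
        exact myAbsSub _ _
      nlinarith [h1, hg, hΛy]
    · simp only [censDensity, if_true, if_neg hy1] at hpos
      exact absurd hpos (lt_irrefl 0)
  | false =>
    by_cases hy1 : y < 1
    · simp only [censDensity, Bool.false_eq_true, if_false, if_pos hy1] at hpos ⊢
      have hΛy := hΛ y hy
      have hfpos : 0 < fC x y := by
        nlinarith [Real.exp_pos (-(cumHaz d g₂ x y))]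
      refine ⟨mul_pos hfpos (Real.exp_pos _), ?_⟩
      rw [mul_div_mul_left _ _ (ne_of_gt hfpos), ← Real.exp_sub, Real.log_exp,
        show -(cumHaz d g₁ x y) - -(cumHaz d g₂ x y)
          = -(cumHaz d g₁ x y - cumHaz d g₂ x y) by ring, abs_neg]
      nlinarith [hΛy]
    · simp only [censDensity, Bool.false_eq_true, if_false, if_neg hy1] at hpos ⊢
      have hΛ1 := hΛ 1 ⟨zero_le_one, le_refl 1⟩
      have hapos : 0 < α x := by
        nlinarith [Real.exp_pos (-(cumHaz d g₂ x 1))]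
      refine ⟨mul_pos hapos (Real.exp_pos _), ?_⟩
      rw [mul_div_mul_left _ _ (ne_of_gt hapos), ← Real.exp_sub, Real.log_exp,
        show -(cumHaz d g₁ x 1) - -(cumHaz d g₂ x 1)
          = -(cumHaz d g₁ x 1 - cumHaz d g₂ x 1) by ring, abs_neg]
      nlinarith [hΛ1]
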